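/- arXiv:1705.02736 — 2 statements merged into one kernel-verified Lean document; each statement's English description precedes it below -/
import Mathlib

section
/- Let $d \ge 3$ and let $V : \{(x,y) \in \mathbb{R}^d_+ \times \mathbb{R}^d_+ : x \ne y\} \to [0,\infty)$ satisfy: (i) $V(x,y) \le K \min\{d_x, |x-y|\}^{\alpha} |x-y|^{2-d-\alpha}$ for all $0 < |x-y| < R_2$, and (ii) $V(x,y) = V^*(y,x)$ where $V^*$ also satisfies estimate (i) with the same constants. Suppose moreover there is a constant $K'$ such that whenever $4 d_y < |x-y|/4 =: R < R_2/8$, $V(x,y) \le K' (d_y)^\alpha R^{-d/2-\alpha} \big( \int_{\Omega_{2R}(y)} V^*(z,x)^2 dz \big)^{1/2}$. Then there is $C = C(d, K, K', \alpha)$ such that for all $x, y$ with $0 < |x-y| < R_2/2$, $V(x,y) \le C \min\{d_x, |x-y|\}^{\alpha} \min\{d_y, |x-y|\}^{\alpha} |x-y|^{2-d-2\alpha}$. -/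
/-!
Where `d_y ≥ |x - y| / 16`, the one-sided estimate already gives the claim, because
`min (d_y, |x - y|)` is comparable to `|x - y|`. Otherwise the boundary Hölder estimate in `y`
reduces `V(x, y)` to the `L²` norm of `V^*(·, x) = V(x, ·)` over `Ω_{2R}(y)`, `R = |x - y| / 4`.
There `|x - z|` lies between `|x - y| / 2` and `3 |x - y| / 2`, so the one-sided estimate bounds
the integrand by a multiple of `min (d_x, |x - y|)^α |x - y|^(2 - d - α)`, and the volume
`~ R^d` of the ball makes the powers of `|x - y|` add up to `2 - d - 2α`.
-/

open MeasureTheory Metric Set Module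

theorem min_le_mul_min {a s t c : ℝ} (ha : 0 ≤ a) (hc : 1 ≤ c) (hst : s ≤ c * t) :
    min a s ≤ c * min a t := by
  rw [mul_min_of_nonneg _ _ (zero_le_one.trans hc)]
  exact min_le_min (le_mul_of_one_le_left ha hc) hst

theorem div_four_rpow_mul_div_two_rpow_mul_div_two_rpow {r : ℝ} (hr : 0 < r) (n α : ℝ) :
    (r / 4) ^ (-n / 2 - α) * (r / 2) ^ (2 - n - α) * (r / 2) ^ (n / 2) =
      2 ^ (3 * n / 2 + 3 * α - 2) * r ^ (2 - n - 2 * α) := by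
  have h4 : r / 4 = r * 2 ^ (-2 : ℝ) := by norm_num [Real.rpow_neg]; ring
  have h2 : r / 2 = r * 2 ^ (-1 : ℝ) := by norm_num [Real.rpow_neg]; ring
  rw [h4, h2, Real.mul_rpow hr.le (by positivity), Real.mul_rpow hr.le (by positivity),
    Real.mul_rpow hr.le (by positivity), ← Real.rpow_mul (by norm_num),
    ← Real.rpow_mul (by norm_num), ← Real.rpow_mul (by norm_num)]
  have h : ∀ a b c d e f : ℝ, a * b * (c * d) * (e * f) = b * d * f * (a * c * e) := by
    intros; ring
  rw [h, ← Real.rpow_add two_pos, ← Real.rpow_add two_pos, ← Real.rpow_add hr,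
    ← Real.rpow_add hr]
  congr 2 <;> ring

theorem le_mul_min_rpow_of_le_mul_rpow {v K a b r c α p q : ℝ} (hK : 0 ≤ K) (ha : 0 ≤ a)
    (hα : 0 ≤ α) (hr : 0 < r) (hc : 1 ≤ c) (hb : r ≤ c * b) (hpq : p = q + α)
    (hv : v ≤ K * min a r ^ α * r ^ p) :
    v ≤ K * c ^ α * min a r ^ α * min b r ^ α * r ^ q := by
  have hrb : r ≤ c * min b r := by
    rw [mul_min_of_nonneg _ _ (zero_le_one.trans hc)]
    exact le_min hb (le_mul_of_one_le_left hr.le hc)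
  have hrα : r ^ α ≤ c ^ α * min b r ^ α := by
    rw [← Real.mul_rpow (zero_le_one.trans hc) (le_min (by nlinarith) hr.le)]
    exact Real.rpow_le_rpow hr.le hrb hα
  calc v ≤ K * min a r ^ α * r ^ α * r ^ q := by
        rwa [mul_assoc _ (r ^ α), ← Real.rpow_add hr, add_comm, ← hpq]
    _ ≤ K * min a r ^ α * (c ^ α * min b r ^ α) * r ^ q := by gcongr
    _ = K * c ^ α * min a r ^ α * min b r ^ α * r ^ q := by ring

noncomputable def boundaryDecayConst {E : Type*} [NormedAddCommGroup E] [MeasurableSpace E]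
    (μ : Measure E) (n : ℕ) (K K' α : ℝ) : ℝ :=
  K' * K * (3 / 2) ^ α * 2 ^ (3 * (n : ℝ) / 2 + 3 * α - 2) * μ.real (ball 0 1) ^ ((1 : ℝ) / 2)

theorem boundaryDecayConst_nonneg {E : Type*} [NormedAddCommGroup E] [MeasurableSpace E]
    (μ : Measure E) (n : ℕ) {K K' α : ℝ} (hK : 0 ≤ K) (hK' : 0 ≤ K') :
    0 ≤ boundaryDecayConst μ n K K' α := by
  unfold boundaryDecayConst
  have := measureReal_nonneg (μ := μ) (s := ball 0 1)
  positivity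

section AddHaar

variable {E : Type*} [NormedAddCommGroup E] [NormedSpace ℝ E] [FiniteDimensional ℝ E]
  [MeasurableSpace E] [BorelSpace E] (μ : Measure E) [μ.IsAddHaarMeasure]

theorem setIntegral_sq_le_of_subset_closedBall {f : E → ℝ} {S : Set E} {y : E} {ρ M : ℝ}
    (hρ : 0 ≤ ρ) (hS : S ⊆ closedBall y ρ) (hf : ∀ z ∈ S, |f z| ≤ M) :
    ∫ z in S, f z ^ 2 ∂μ ≤ M ^ 2 * (ρ ^ finrank ℝ E * μ.real (ball 0 1)) := by
  have hSfin : μ S < ⊤ := (measure_mono hS).trans_lt measure_closedBall_lt_top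
  have hf2 : ∀ z ∈ S, ‖f z ^ 2‖ ≤ M ^ 2 := fun z hz => by
    rw [Real.norm_eq_abs, abs_pow, ← sq_abs M]
    exact pow_le_pow_left₀ (abs_nonneg _) ((hf z hz).trans (le_abs_self M)) 2
  calc ∫ z in S, f z ^ 2 ∂μ ≤ M ^ 2 * μ.real S :=
        (le_abs_self _).trans (norm_setIntegral_le_of_norm_le_const hSfin hf2)
    _ ≤ M ^ 2 * μ.real (closedBall y ρ) :=
        mul_le_mul_of_nonneg_left (measureReal_mono hS measure_closedBall_lt_top.ne) (sq_nonneg M)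
    _ = M ^ 2 * (ρ ^ finrank ℝ E * μ.real (ball 0 1)) := by
        rw [Measure.addHaar_real_closedBall μ y hρ]

theorem setIntegral_sq_rpow_half_le_of_subset_closedBall {f : E → ℝ} {S : Set E} {y : E}
    {ρ M : ℝ} (hρ : 0 ≤ ρ) (hM : 0 ≤ M) (hS : S ⊆ closedBall y ρ) (hf : ∀ z ∈ S, |f z| ≤ M) :
    (∫ z in S, f z ^ 2 ∂μ) ^ ((1 : ℝ) / 2) ≤
      M * ρ ^ ((finrank ℝ E : ℝ) / 2) * μ.real (ball 0 1) ^ ((1 : ℝ) / 2) := by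
  have hI := setIntegral_sq_le_of_subset_closedBall μ hρ hS hf
  have hI0 : 0 ≤ ∫ z in S, f z ^ 2 ∂μ := integral_nonneg fun z => sq_nonneg (f z)
  calc (∫ z in S, f z ^ 2 ∂μ) ^ ((1 : ℝ) / 2)
      ≤ (M ^ 2 * (ρ ^ finrank ℝ E * μ.real (ball 0 1))) ^ ((1 : ℝ) / 2) :=
        Real.rpow_le_rpow hI0 hI (by norm_num)
    _ = M * ρ ^ ((finrank ℝ E : ℝ) / 2) * μ.real (ball 0 1) ^ ((1 : ℝ) / 2) := by
        rw [Real.mul_rpow (by positivity) (by positivity),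
          Real.mul_rpow (by positivity) measureReal_nonneg, ← Real.rpow_natCast,
          ← Real.rpow_natCast, ← Real.rpow_mul hM, ← Real.rpow_mul hρ]
        norm_num [mul_assoc, div_eq_mul_inv]

theorem le_of_boundary_holder_estimate {n : ℕ} (hn : finrank ℝ E = n) (hn2 : 2 ≤ n)
    {f : E → ℝ} {S : Set E} {x y : E} {a b v K K' α : ℝ}
    (hK : 0 ≤ K) (hK' : 0 ≤ K') (hα : 0 ≤ α) (ha : 0 ≤ a) (hb : 0 ≤ b) (hbr : b ≤ dist x y)
    (hr : 0 < dist x y) (hS : S ⊆ ball y (2 * (dist x y / 4)))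
    (hf : ∀ z ∈ S, 0 < dist x z → dist x z < 3 / 2 * dist x y →
      0 ≤ f z ∧ f z ≤ K * min a (dist x z) ^ α * dist x z ^ (2 - (n : ℝ) - α))
    (hv : v ≤ K' * b ^ α * (dist x y / 4) ^ (-(n : ℝ) / 2 - α) *
      (∫ z in S, f z ^ 2 ∂μ) ^ ((1 : ℝ) / 2)) :
    v ≤ boundaryDecayConst μ n K K' α * min a (dist x y) ^ α * min b (dist x y) ^ α *
      dist x y ^ (2 - (n : ℝ) - 2 * α) := by
  set r := dist x y
  set M := K * ((3 / 2) ^ α * min a r ^ α) * (r / 2) ^ (2 - (n : ℝ) - α)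
  have hS' : S ⊆ closedBall y (r / 2) := by
    rw [show r / 2 = 2 * (r / 4) by ring]; exact hS.trans ball_subset_closedBall
  have hfM : ∀ z ∈ S, |f z| ≤ M := by
    intro z hz
    have hzy : dist z y < r / 2 := by have := hS hz; rw [mem_ball] at this; linarith
    have hxz : r / 2 ≤ dist x z := by linarith [dist_triangle x z y]
    have hxz' : dist x z < 3 / 2 * r := by linarith [dist_triangle x y z, dist_comm y z]
    obtain ⟨hf0, hfK⟩ := hf z hz (by linarith) hxz'
    have hmin : min a (dist x z) ^ α ≤ (3 / 2) ^ α * min a r ^ α := by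
      rw [← Real.mul_rpow (by norm_num) (le_min ha hr.le)]
      exact Real.rpow_le_rpow (le_min ha (by linarith))
        (min_le_mul_min ha (by norm_num) hxz'.le) hα
    have hp : 2 - (n : ℝ) - α ≤ 0 := by
      have : (2 : ℝ) ≤ n := by exact_mod_cast hn2
      linarith
    rw [abs_of_nonneg hf0]
    refine hfK.trans (mul_le_mul (mul_le_mul_of_nonneg_left hmin hK)
      (Real.rpow_le_rpow_of_nonpos (by linarith) hxz hp) (by positivity) (by positivity))
  have hM : 0 ≤ M := by positivity
  have hI := setIntegral_sq_rpow_half_le_of_subset_closedBall μ (by linarith) hM hS' hfM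
  rw [hn] at hI
  have hpow := div_four_rpow_mul_div_two_rpow_mul_div_two_rpow hr n α
  calc v ≤ K' * b ^ α * (r / 4) ^ (-(n : ℝ) / 2 - α) *
        (M * (r / 2) ^ ((n : ℝ) / 2) * μ.real (ball 0 1) ^ ((1 : ℝ) / 2)) :=
        hv.trans (mul_le_mul_of_nonneg_left hI (by positivity))
    _ = _ := by
        rw [min_eq_left hbr, boundaryDecayConst]
        linear_combination (K' * K * (3 / 2) ^ α * μ.real (ball 0 1) ^ ((1 : ℝ) / 2) *
          min a r ^ α * b ^ α) * hpow

end AddHaar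

/-- two-sided boundary decay of the Green function on the half space
(Step 2 of Theorem MRG), from the one-sided estimate, the duality relation
`V(x,y) = V^*(y,x)`, and the boundary Hölder estimate in the `y`-variable. -/
theorem stmt_9 (d : ℕ) (hd : 3 ≤ d) (K K' α R₂ : ℝ)
    (hK : 0 < K) (hK' : 0 < K') (hα : α ∈ Ioo (0 : ℝ) 1)
    (V Vs : EuclideanSpace ℝ (Fin d) → EuclideanSpace ℝ (Fin d) → ℝ)
    (hVspos : ∀ x y, 0 ≤ Vs x y)
    -- (i) one-sided decay for `V`
    (hi : ∀ x y : EuclideanSpace ℝ (Fin d),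
      0 < x (⟨0, by omega⟩ : Fin d) → 0 < y (⟨0, by omega⟩ : Fin d) →
      0 < dist x y → dist x y < R₂ →
      V x y ≤ K * min (x (⟨0, by omega⟩ : Fin d)) (dist x y) ^ α *
        dist x y ^ (2 - (d : ℝ) - α))
    -- (ii) duality and one-sided decay for `V^*`
    (hsym : ∀ x y : EuclideanSpace ℝ (Fin d),
      0 < x (⟨0, by omega⟩ : Fin d) → 0 < y (⟨0, by omega⟩ : Fin d) → x ≠ y →
      V x y = Vs y x)
    -- boundary Hölder estimate in the `y`-variable
    (hint : ∀ x y : EuclideanSpace ℝ (Fin d),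
      0 < x (⟨0, by omega⟩ : Fin d) → 0 < y (⟨0, by omega⟩ : Fin d) →
      ∀ R : ℝ, R = dist x y / 4 → 4 * y (⟨0, by omega⟩ : Fin d) < R → R < R₂ / 8 →
      V x y ≤ K' * y (⟨0, by omega⟩ : Fin d) ^ α * R ^ (-(d : ℝ) / 2 - α) *
        (∫ z in {w : EuclideanSpace ℝ (Fin d) | 0 < w (⟨0, by omega⟩ : Fin d)} ∩ ball y (2 * R),
          (Vs z x) ^ 2) ^ ((1 : ℝ) / 2)) :
    ∃ C : ℝ, 0 < C ∧
      ∀ x y : EuclideanSpace ℝ (Fin d),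
        0 < x (⟨0, by omega⟩ : Fin d) → 0 < y (⟨0, by omega⟩ : Fin d) →
        0 < dist x y → dist x y < R₂ / 2 →
        V x y ≤ C * min (x (⟨0, by omega⟩ : Fin d)) (dist x y) ^ α *
          min (y (⟨0, by omega⟩ : Fin d)) (dist x y) ^ α *
          dist x y ^ (2 - (d : ℝ) - 2 * α) := by
  obtain ⟨hα0, -⟩ := hα
  set CB := boundaryDecayConst (volume : Measure (EuclideanSpace ℝ (Fin d))) d K K' α
  have hCB : 0 ≤ CB := boundaryDecayConst_nonneg _ _ hK.le hK'.le
  refine ⟨K * 16 ^ α + CB, by positivity, fun x y hx hy hr hrR => ?_⟩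
  by_cases hcase : 4 * y ⟨0, by omega⟩ < dist x y / 4
  · refine (le_of_boundary_holder_estimate volume finrank_euclideanSpace_fin (by omega) hK.le
      hK'.le hα0.le hx.le hy.le (by linarith) hr inter_subset_right ?_
      (hint x y hx hy _ rfl hcase (by linarith))).trans ?_
    · rintro z ⟨hz, -⟩ hxz hxz'
      exact ⟨hVspos z x, hsym x z hx hz (dist_pos.1 hxz) ▸ hi x z hx hz hxz (by linarith)⟩
    · gcongr
      exact le_add_of_nonneg_left (by positivity)
  · refine (le_mul_min_rpow_of_le_mul_rpow (b := y ⟨0, by omega⟩) (c := 16) (q := 2 - d - 2 * α)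
      hK.le hx.le hα0.le hr (by norm_num) (by linarith) (by ring)
      (hi x y hx hy hr (by linarith))).trans ?_
    gcongr
    exact le_add_of_nonneg_right hCB
end

section
/- Let $d \ge 3$ and suppose $V, {}^*V : \mathbb{R}^d \times \mathbb{R}^d \to \mathbb{R}^{d\times d}$ and families $(V_\varepsilon)_{\varepsilon>0}$, $({}^*V_\delta)_{\delta>0}$ of continuous matrix-valued functions satisfy: (i) the exchange identity $\fint_{B_\varepsilon(y)} {}^*V^{k\ell}_\delta(z, x)\,dz = \fint_{B_\delta(x)} V^{\ell k}_\varepsilon(z, y)\,dz$ for all $\varepsilon, \delta > 0$, $x \ne y$, and all $k, \ell$; (ii) for every compact $K \subset \mathbb{R}^d \setminus \{y\}$ there are sequences $\varepsilon_\rho \to 0$, $\delta_\tau \to 0$ with $V_{\varepsilon_\rho}(\cdot, y) \to V(\cdot, y)$ and ${}^*V_{\delta_\tau}(\cdot, x) \to {}^*V(\cdot, x)$ uniformly on compacts avoiding the poles, and the limits $V(\cdot,y)$, ${}^*V(\cdot,x)$ are continuous away from their poles. Then for all $x \ne y$ and all $k, \ell$: $V^{\ell k}(x, y) = {}^*V^{k\ell}(y,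 x)$, i.e., $V(x,y) = {}^*V(y,x)^{\mathrm{tr}}$. -/
/-!
Fix `x ≠ y` and an entry `(k, l)`. For a fixed small `ε`, let `δ → 0` in the exchange identity:
the left side tends to the `ε`-average of `*V(·, x)` over `B_ε(y)` (uniform convergence on a
compact ball around `y` avoiding `x`), the right side to `V_ε(x, y)` (continuity of `V_ε`).
Letting then `ε → 0` along the sequence converging to `V(·, y)` at `x`, the left side tends to
`*V(y, x)` by continuity of `*V(·, x)` near `y`.
-/

open MeasureTheory Metric Set Filter Topology
open scoped ENNReal

theorem TendstoUniformlyOn.matrix_elem {ι β m n R : Type*} [UniformSpace R]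
    {F : ι → β → Matrix m n R} {f : β → Matrix m n R} {l : Filter ι} {s : Set β}
    (h : TendstoUniformlyOn F f l s) (i : m) (j : n) :
    TendstoUniformlyOn (fun a z => F a z i j) (fun z => f z i j) l s :=
  ((Pi.uniformContinuous_proj (fun _ : n => R) j).comp
    (Pi.uniformContinuous_proj (fun _ : m => n → R) i)).comp_tendstoUniformlyOn h

section Averages

variable {α E : Type*} [MeasurableSpace α] {μ : Measure α}
  [NormedAddCommGroup E] [NormedSpace ℝ E]

theorem dist_setAverage_le {s : Set α} (hs₀ : μ s ≠ 0) (hs : μ s ≠ ∞) {f g : α → E}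
    (hf : IntegrableOn f s μ) (hg : IntegrableOn g s μ) {C : ℝ}
    (hC : ∀ x ∈ s, dist (f x) (g x) ≤ C) :
    dist (⨍ x in s, f x ∂μ) (⨍ x in s, g x ∂μ) ≤ C := by
  have hμs : 0 < μ.real s := ENNReal.toReal_pos hs₀ hs
  have hint : ‖∫ x in s, (f x - g x) ∂μ‖ ≤ C * μ.real s :=
    norm_setIntegral_le_of_norm_le_const hs.lt_top fun x hx => by
      simpa only [dist_eq_norm] using hC x hx
  rw [dist_eq_norm, setAverage_eq, setAverage_eq, ← smul_sub, ← integral_sub hf hg,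
    norm_smul, Real.norm_of_nonneg (inv_nonneg.2 hμs.le)]
  calc (μ.real s)⁻¹ * ‖∫ x in s, (f x - g x) ∂μ‖ ≤ (μ.real s)⁻¹ * (C * μ.real s) := by gcongr
    _ = C := by field_simp

theorem tendsto_setAverage_of_tendstoUniformlyOn {ι : Type*} {l : Filter ι} {s : Set α}
    (hs₀ : μ s ≠ 0) (hs : μ s ≠ ∞) {F : ι → α → E} {f : α → E}
    (hF : ∀ᶠ i in l, IntegrableOn (F i) s μ) (hf : IntegrableOn f s μ)
    (h : TendstoUniformlyOn F f l s) :
    Tendsto (fun i => ⨍ x in s, F i x ∂μ) l (𝓝 (⨍ x in s, f x ∂μ)) := by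
  refine Metric.tendsto_nhds.2 fun η hη => ?_
  filter_upwards [hF, Metric.tendstoUniformlyOn_iff.1 h (η / 2) (half_pos hη)] with i hFi hi
  calc dist (⨍ x in s, F i x ∂μ) (⨍ x in s, f x ∂μ) ≤ η / 2 :=
        dist_setAverage_le hs₀ hs hFi hf fun x hx => by rw [dist_comm]; exact (hi x hx).le
    _ < η := half_lt_self hη

variable [MetricSpace α] [ProperSpace α] [OpensMeasurableSpace α]
  [IsFiniteMeasureOnCompacts μ] [μ.IsOpenPosMeasure]

theorem tendsto_setAverage_ball_of_continuousOn [CompleteSpace E] {f : α → E} {U : Set α} {x : α}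
    (hU : U ∈ 𝓝 x) (hf : ContinuousOn f U) :
    Tendsto (fun r => ⨍ y in ball x r, f y ∂μ) (𝓝[>] 0) (𝓝 (f x)) := by
  refine Metric.tendsto_nhds.2 fun η hη => ?_
  have hnear : U ∩ {y | dist (f y) (f x) < η / 2} ∈ 𝓝 x :=
    inter_mem hU ((hf.continuousAt hU).eventually (Metric.ball_mem_nhds _ (half_pos hη)))
  obtain ⟨ε, hε, hεU⟩ := Metric.nhds_basis_closedBall.mem_iff.1 hnear
  filter_upwards [Ioo_mem_nhdsGT hε] with r ⟨hr, hrε⟩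
  have hball : closedBall x r ⊆ U ∩ {y | dist (f y) (f x) < η / 2} :=
    (closedBall_subset_closedBall hrε.le).trans hεU
  have hfi : IntegrableOn f (ball x r) μ :=
    ((hf.mono fun y hy => (hball hy).1).integrableOn_compact (isCompact_closedBall x r)).mono_set
      ball_subset_closedBall
  have hμ₀ : μ (ball x r) ≠ 0 := (measure_ball_pos μ x hr).ne'
  have hμ : μ (ball x r) ≠ ∞ := measure_ball_lt_top.ne
  calc dist (⨍ y in ball x r, f y ∂μ) (f x)
      = dist (⨍ y in ball x r, f y ∂μ) (⨍ _ in ball x r, f x ∂μ) := by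
        rw [setAverage_const hμ₀ hμ]
    _ ≤ η / 2 := dist_setAverage_le hμ₀ hμ hfi (integrableOn_const hμ) fun y hy =>
        (hball (ball_subset_closedBall hy)).2.le
    _ < η := half_lt_self hη

end Averages

theorem stmt_14_general (d : ℕ)
    (V Vs : EuclideanSpace ℝ (Fin d) → EuclideanSpace ℝ (Fin d) → Matrix (Fin d) (Fin d) ℝ)
    (Vε Vsδ : ℝ → EuclideanSpace ℝ (Fin d) → EuclideanSpace ℝ (Fin d) →
      Matrix (Fin d) (Fin d) ℝ)
    -- the averaged solutions are continuous
    (hVεcont : ∀ ε : ℝ, 0 < ε → ∀ y, Continuous fun z => Vε ε z y)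
    (hVsδcont : ∀ δ : ℝ, 0 < δ → ∀ x, Continuous fun z => Vsδ δ z x)
    -- (i) exchange identity
    (hexch : ∀ ε δ : ℝ, 0 < ε → 0 < δ →
      ∀ x y : EuclideanSpace ℝ (Fin d), x ≠ y → ∀ k l : Fin d,
      (⨍ z in ball y ε, Vsδ δ z x k l) = ⨍ z in ball x δ, Vε ε z y l k)
    -- (ii) uniform convergence on compacts avoiding the poles, and continuity of the limits
    (hVconv : ∀ y : EuclideanSpace ℝ (Fin d), ∀ K : Set (EuclideanSpace ℝ (Fin d)),
      IsCompact K → K ⊆ {y}ᶜ →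
      ∃ ε' : ℕ → ℝ, (∀ n, 0 < ε' n) ∧ Tendsto ε' atTop (nhds 0) ∧
        TendstoUniformlyOn (fun n z => Vε (ε' n) z y) (fun z => V z y) atTop K)
    (hVsconv : ∀ x : EuclideanSpace ℝ (Fin d), ∀ K : Set (EuclideanSpace ℝ (Fin d)),
      IsCompact K → K ⊆ {x}ᶜ →
      ∃ δ' : ℕ → ℝ, (∀ n, 0 < δ' n) ∧ Tendsto δ' atTop (nhds 0) ∧
        TendstoUniformlyOn (fun n z => Vsδ (δ' n) z x) (fun z => Vs z x) atTop K)
    (hVscont : ∀ x, ContinuousOn (fun z => Vs z x) {x}ᶜ) :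
    ∀ x y : EuclideanSpace ℝ (Fin d), x ≠ y → ∀ k l : Fin d,
      V x y l k = Vs y x k l := by
  intro x y hxy k l
  have hR : 0 < dist x y / 2 := half_pos (dist_pos.2 hxy)
  have hK : closedBall y (dist x y / 2) ⊆ {x}ᶜ := fun z hz (hzx : z = x) => by
    rw [hzx, mem_closedBall] at hz
    linarith
  have hVs : ContinuousOn (fun z => Vs z x k l) {x}ᶜ :=
    (continuous_id.matrix_elem k l).comp_continuousOn (hVscont x)
  have hVsK : IntegrableOn (fun z => Vs z x k l) (closedBall y (dist x y / 2)) :=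
    (hVs.mono hK).integrableOn_compact (isCompact_closedBall _ _)
  have hsmall : ∀ ε ∈ Ioc 0 (dist x y / 2), ⨍ z in ball y ε, Vs z x k l = Vε ε x y l k := by
    rintro ε ⟨hε, hεR⟩
    obtain ⟨δ, hδpos, hδ0, hδunif⟩ := hVsconv x _ (isCompact_closedBall y _) hK
    have hδ : Tendsto δ atTop (𝓝[>] 0) := tendsto_nhdsWithin_iff.2 ⟨hδ0, .of_forall hδpos⟩
    have hball : ball y ε ⊆ closedBall y (dist x y / 2) :=
      ball_subset_closedBall.trans (closedBall_subset_closedBall hεR)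
    have hμ₀ : volume (ball y ε) ≠ 0 := (measure_ball_pos _ _ hε).ne'
    have hμ : volume (ball y ε) ≠ ∞ := measure_ball_lt_top.ne
    refine tendsto_nhds_unique (tendsto_setAverage_of_tendstoUniformlyOn hμ₀ hμ
      (.of_forall fun n => ?_) (hVsK.mono_set hball) ((hδunif.matrix_elem k l).mono hball)) ?_
    · exact (((hVsδcont _ (hδpos n) x).matrix_elem k l).continuousOn.integrableOn_compact
        (isCompact_closedBall y ε)).mono_set ball_subset_closedBall
    · refine ((tendsto_setAverage_ball_of_continuousOn (μ := volume) univ_mem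
        ((hVεcont ε hε y).matrix_elem l k).continuousOn).comp hδ).congr fun n => ?_
      exact (hexch ε (δ n) hε (hδpos n) x y hxy k l).symm
  obtain ⟨ε, hεpos, hε0, hεunif⟩ := hVconv y {x} isCompact_singleton (singleton_subset_iff.2 hxy)
  have hε : Tendsto ε atTop (𝓝[>] 0) := tendsto_nhdsWithin_iff.2 ⟨hε0, .of_forall hεpos⟩
  refine tendsto_nhds_unique ((hεunif.matrix_elem l k).tendsto_at (mem_singleton x))
    (((tendsto_setAverage_ball_of_continuousOn (μ := volume)
      (isOpen_compl_singleton.mem_nhds hxy.symm) hVs).comp hε).congr' ?_)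
  filter_upwards [hε (Ioc_mem_nhdsGT hR)] with n hn
  exact hsmall (ε n) hn

/-- symmetry/duality relation `V(x,y) = {}^*V(y,x)^{tr}` (Corollary 2.7)
from the exchange identity for the averaged fundamental solutions and uniform convergence
on compact sets away from the poles. -/
theorem stmt_14 (d : ℕ) (hd : 3 ≤ d)
    (V Vs : EuclideanSpace ℝ (Fin d) → EuclideanSpace ℝ (Fin d) → Matrix (Fin d) (Fin d) ℝ)
    (Vε Vsδ : ℝ → EuclideanSpace ℝ (Fin d) → EuclideanSpace ℝ (Fin d) →
      Matrix (Fin d) (Fin d) ℝ)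
    -- the averaged solutions are continuous
    (hVεcont : ∀ ε : ℝ, 0 < ε → ∀ y, Continuous fun z => Vε ε z y)
    (hVsδcont : ∀ δ : ℝ, 0 < δ → ∀ x, Continuous fun z => Vsδ δ z x)
    -- (i) exchange identity
    (hexch : ∀ ε δ : ℝ, 0 < ε → 0 < δ →
      ∀ x y : EuclideanSpace ℝ (Fin d), x ≠ y → ∀ k l : Fin d,
      (⨍ z in ball y ε, Vsδ δ z x k l) = ⨍ z in ball x δ, Vε ε z y l k)
    -- (ii) uniform convergence on compacts avoiding the poles, and continuity of the limits
    (hVconv : ∀ y : EuclideanSpace ℝ (Fin d), ∀ K : Set (EuclideanSpace ℝ (Fin d)),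
      IsCompact K → K ⊆ {y}ᶜ →
      ∃ ε' : ℕ → ℝ, (∀ n, 0 < ε' n) ∧ Tendsto ε' atTop (nhds 0) ∧
        TendstoUniformlyOn (fun n z => Vε (ε' n) z y) (fun z => V z y) atTop K)
    (hVsconv : ∀ x : EuclideanSpace ℝ (Fin d), ∀ K : Set (EuclideanSpace ℝ (Fin d)),
      IsCompact K → K ⊆ {x}ᶜ →
      ∃ δ' : ℕ → ℝ, (∀ n, 0 < δ' n) ∧ Tendsto δ' atTop (nhds 0) ∧
        TendstoUniformlyOn (fun n z => Vsδ (δ' n) z x) (fun z => Vs z x) atTop K)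
    (hVcont : ∀ y, ContinuousOn (fun z => V z y) {y}ᶜ)
    (hVscont : ∀ x, ContinuousOn (fun z => Vs z x) {x}ᶜ) :
    ∀ x y : EuclideanSpace ℝ (Fin d), x ≠ y → ∀ k l : Fin d,
      V x y l k = Vs y x k l :=
  stmt_14_general d V Vs Vε Vsδ hVεcont hVsδcont hexch hVconv hVsconv hVscont
end
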